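/- If two infinite binary sequences x and y have maximal common prefix w (i.e., x = w·a·… and y = w·ā·… with a ≠ ā), then for every n ≥ 0, the sequences H^n(x) and H^n(y) agree on exactly their first |H^n(w)| + F_{n+2} − 2 symbols. -/

import Mathlib

/-- Fibonacci substitution on finite words: H(0)=01, H(1)=0 (0 ↦ `false`, 1 ↦ `true`). -/
def Hword : List Bool → List Bool
  | [] => []
  | false :: t => false :: true :: Hword t
  | true :: t => false :: Hword t

/-- Paper-indexed Fibonacci numbers, shifted by 2: `fibP k = F_{k-2}`, so
`fibP 0 = F_{-2} = 1`, `fibP 1 = F_{-1} = 0`, `fibP 2 = F_0 = 1`, `fibP 3 = F_1 = 1`, … -/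
def fibP : ℕ → ℕ
  | 0 => 1
  | 1 => 0
  | n + 2 => fibP (n + 1) + fibP n

/-- Fibonacci substitution on infinite binary sequences. -/
def Hseq (x : ℕ → Bool) : ℕ → Bool :=
  fun n => (Hword ((List.range (n + 1)).map x)).getD n false

/-- The left shift on infinite binary sequences. -/
def shift (x : ℕ → Bool) : ℕ → Bool := fun n => x (n + 1)

/-!
Every image `H(a b …)` begins with `0 ā`. Hence if `x` and `y` first differ at position `|w|`,
`H(x)` and `H(y)` share the prefix `H(w) 0` and first differ right after it. Iterating, the
prefix `w` is replaced by `H(w) 0`, and since `|H^k(0)| = F_{k+1}` the agreement length grows as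
`|H^{n+1}(w)| + F_{n+1} + F_{n+2} - 2 = |H^{n+1}(w)| + F_{n+3} - 2`.
-/

theorem Hword_append (u v : List Bool) : Hword (u ++ v) = Hword u ++ Hword v := by
  induction u with
  | nil => rfl
  | cons a t ih => cases a <;> simp [Hword, ih]

theorem length_le_length_Hword (l : List Bool) : l.length ≤ (Hword l).length := by
  induction l with
  | nil => simp
  | cons a t ih => cases a <;> simp [Hword] <;> omega

theorem Hword_cons_cons (a b : Bool) (t : List Bool) :
    ∃ r, Hword (a :: b :: t) = false :: (!a) :: r := by
  cases a <;> cases b <;> exact ⟨_, rfl⟩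

theorem iterate_Hword_append (n : ℕ) (u v : List Bool) :
    Hword^[n] (u ++ v) = Hword^[n] u ++ Hword^[n] v := by
  induction n with
  | zero => rfl
  | succ n ih => simp only [Function.iterate_succ_apply', ih, Hword_append]

theorem length_iterate_Hword_false : ∀ n : ℕ, (Hword^[n] [false]).length = fibP (n + 3)
  | 0 => rfl
  | 1 => rfl
  | n + 2 => by
    have hsplit : Hword^[n + 2] [false] = Hword^[n + 1] [false] ++ Hword^[n] [false] := by
      show Hword^[n + 1] ([false] ++ [true]) = _
      rw [iterate_Hword_append]
      rfl
    rw [hsplit, List.length_append, length_iterate_Hword_false (n + 1),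
      length_iterate_Hword_false n]
    rfl

theorem fibP_add_five (n : ℕ) : fibP (n + 5) = fibP (n + 4) + fibP (n + 3) := rfl

section Hseq

variable (x : ℕ → Bool)

theorem getD_Hword_map_range_add (k d : ℕ) {i : ℕ}
    (hi : i < (Hword ((List.range k).map x)).length) :
    (Hword ((List.range (k + d)).map x)).getD i false
      = (Hword ((List.range k).map x)).getD i false := by
  rw [List.range_add, List.map_append, Hword_append, List.getD_append _ _ _ _ hi]

theorem Hseq_apply_eq_getD (k : ℕ) {i : ℕ} (hi : i < (Hword ((List.range k).map x)).length) :
    Hseq x i = (Hword ((List.range k).map x)).getD i false := by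
  have hi' : i < (Hword ((List.range (i + 1)).map x)).length := by
    have := length_le_length_Hword ((List.range (i + 1)).map x)
    simp only [List.length_map, List.length_range] at this
    omega
  rcases le_total k (i + 1) with hk | hk
  · obtain ⟨d, hd⟩ := Nat.exists_eq_add_of_le hk
    rw [Hseq, hd, getD_Hword_map_range_add x k d hi]
  · obtain ⟨d, hd⟩ := Nat.exists_eq_add_of_le hk
    rw [Hseq, hd, getD_Hword_map_range_add x (i + 1) d hi']

theorem Hword_map_range_add_two (m : ℕ) :
    ∃ r, Hword ((List.range (m + 2)).map x)
      = Hword ((List.range m).map x) ++ false :: (!x m) :: r := by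
  obtain ⟨r, hr⟩ := Hword_cons_cons (x m) (x (m + 1)) []
  refine ⟨r, ?_⟩
  rw [List.range_add, List.map_append, Hword_append, ← hr]
  rfl

theorem Hseq_apply_length_Hword (m : ℕ) :
    Hseq x (Hword ((List.range m).map x)).length = false := by
  obtain ⟨r, hr⟩ := Hword_map_range_add_two x m
  rw [Hseq_apply_eq_getD x (m + 2) (by simp [hr]), hr]
  simp

theorem Hseq_apply_length_Hword_add_one (m : ℕ) :
    Hseq x ((Hword ((List.range m).map x)).length + 1) = !x m := by
  obtain ⟨r, hr⟩ := Hword_map_range_add_two x m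
  rw [Hseq_apply_eq_getD x (m + 2) (by simp [hr]), hr]
  simp

theorem map_range_Hseq (m : ℕ) :
    (List.range ((Hword ((List.range m).map x)).length + 1)).map (Hseq x)
      = Hword ((List.range m).map x) ++ [false] := by
  refine List.ext_getElem (by simp) fun i hi _ => ?_
  simp only [List.getElem_map, List.getElem_range]
  rcases Nat.lt_succ_iff_lt_or_eq.1 (by simpa using hi) with hlt | rfl
  · rw [Hseq_apply_eq_getD x m hlt, List.getElem_append_left hlt, List.getD_eq_getElem]
  · simp [Hseq_apply_length_Hword]

end Hseq

def FirstDiffAt (x y : ℕ → Bool) (m : ℕ) : Prop :=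
  (∀ i < m, x i = y i) ∧ x m ≠ y m

theorem FirstDiffAt.apply_Hseq {x y : ℕ → Bool} {m : ℕ} (h : FirstDiffAt x y m) :
    FirstDiffAt (Hseq x) (Hseq y) ((Hword ((List.range m).map x)).length + 1) := by
  obtain ⟨hagree, hdiff⟩ := h
  have hpre : (List.range m).map y = (List.range m).map x :=
    List.map_inj_left.2 fun i hi => (hagree i (List.mem_range.1 hi)).symm
  have hmap := map_range_Hseq y m
  rw [hpre, ← map_range_Hseq x m] at hmap
  refine ⟨fun i hi => (List.map_inj_left.1 hmap i (List.mem_range.2 hi)).symm, ?_⟩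
  rw [Hseq_apply_length_Hword_add_one, ← hpre, Hseq_apply_length_Hword_add_one]
  simpa using hdiff

theorem FirstDiffAt.iterate_Hseq {x y : ℕ → Bool} {m : ℕ} (h : FirstDiffAt x y m) (n : ℕ) :
    FirstDiffAt (Hseq^[n] x) (Hseq^[n] y)
      ((Hword^[n] ((List.range m).map x)).length + fibP (n + 4) - 2) := by
  induction n generalizing x y m with
  | zero => simpa [fibP] using h
  | succ n ih =>
    have hlen : (Hword^[n] ((List.range ((Hword ((List.range m).map x)).length + 1)).map
        (Hseq x))).length = (Hword^[n + 1] ((List.range m).map x)).length + fibP (n + 3) := by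
      rw [map_range_Hseq, iterate_Hword_append, List.length_append,
        length_iterate_Hword_false, Function.iterate_succ_apply]
    have := ih h.apply_Hseq
    rw [hlen, add_right_comm, add_assoc, ← fibP_add_five] at this
    simpa only [Function.iterate_succ_apply] using this

/-- if `x` and `y` have maximal common prefix `w` (of length `m`), then
`H^n(x)` and `H^n(y)` agree on exactly their first `|H^n(w)| + F_{n+2} - 2` symbols
(recall `fibP (n+4) = F_{n+2}`). -/
theorem Hn_agreement (x y : ℕ → Bool) (m : ℕ)
    (hagree : ∀ i < m, x i = y i) (hdiff : x m ≠ y m) (n : ℕ) :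
    (∀ i < (Hword^[n] ((List.range m).map x)).length + fibP (n + 4) - 2,
        Hseq^[n] x i = Hseq^[n] y i) ∧
    Hseq^[n] x ((Hword^[n] ((List.range m).map x)).length + fibP (n + 4) - 2)
      ≠ Hseq^[n] y ((Hword^[n] ((List.range m).map x)).length + fibP (n + 4) - 2) :=
  FirstDiffAt.iterate_Hseq ⟨hagree, hdiff⟩ n
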